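/- Let a ∈ ℝⁿ (n ≥ 2) be alternance-free and v ∈ ℝⁿ Chebyshev. Then sign(μ(a,v)) = sign(a_{χ(a)} · v_{χ(a)}), where χ(a) is the index of the maximum-absolute-value component of a. -/

import Mathlib

open Filter

/-- A vector is Chebyshev if all of its components are non-zero. -/
def Cheb {n : ℕ} (v : Fin n → ℝ) : Prop := ∀ i, v i ≠ 0

/-- `mu a v` is the (unique, when `v` is Chebyshev) minimizer of `u ↦ ‖a - u • v‖`,
where `‖·‖` is the sup-norm on `Fin n → ℝ`. -/
noncomputable def mu {n : ℕ} (a v : Fin n → ℝ) : ℝ :=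
  Classical.epsilon fun t : ℝ => ∀ u : ℝ, ‖a - t • v‖ ≤ ‖a - u • v‖

noncomputable def phi {m n : ℕ} (A : Fin m → Fin n → ℝ) (v : Fin n → ℝ) : Fin m → ℝ :=
  fun i => mu (A i) v

noncomputable def psi {m n : ℕ} (A : Fin m → Fin n → ℝ) (u : Fin m → ℝ) : Fin n → ℝ :=
  fun j => mu (fun i => A i j) u

/-- `A` preserves Chebyshev systems. -/
def PreservesCheb {m n : ℕ} (A : Fin m → Fin n → ℝ) : Prop :=
  (∀ v : Fin n → ℝ, Cheb v → Cheb (phi A v)) ∧ (∀ u : Fin m → ℝ, Cheb u → Cheb (psi A u))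

/-- A vector is alternance-free if exactly one component attains the max absolute value. -/
def AlternanceFree {n : ℕ} (a : Fin n → ℝ) : Prop := ∃! i, |a i| = ‖a‖

/-- Chebyshev norm of the residual `A - u vᵀ`. -/
noncomputable def Cerr {m n : ℕ} (A : Fin m → Fin n → ℝ) (u : Fin m → ℝ) (v : Fin n → ℝ) : ℝ :=
  ⨆ i, ⨆ j, |A i j - u i * v j|

/-- Chebyshev norm of a matrix. -/
noncomputable def CnormM {m n : ℕ} (A : Fin m → Fin n → ℝ) : ℝ :=
  ⨆ i, ⨆ j, |A i j|

/-- The sequence `v⁽ᵏ⁾` of the alternating minimization method started at `v0`. -/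
noncomputable def vseq {m n : ℕ} (A : Fin m → Fin n → ℝ) (v0 : Fin n → ℝ) : ℕ → Fin n → ℝ
  | 0 => v0
  | k + 1 => psi A (phi A (vseq A v0 k))

/-!
The minimal residual `‖a - μ v‖` is at most `‖a‖` (take `u = 0`), and strictly less when `a ≠ 0` is
alternance-free: moving `u` slightly from `0` towards `sign (a_χ v_χ)` shrinks `|a_χ - u v_χ|`, while
the other coordinates stay below `‖a‖` by continuity. If `μ` had the wrong sign (or were `0`), the
coordinate `χ` alone would give `|a_χ - μ v_χ| ≥ |a_χ| = ‖a‖`.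
-/

open Topology

lemma abs_le_abs_sub_of_mul_nonpos {x y : ℝ} (h : x * y ≤ 0) : |x| ≤ |x - y| :=
  sq_le_sq.mp (by nlinarith)

lemma Real.sign_eq_sign_of_mul_pos {x y : ℝ} (h : 0 < x * y) : Real.sign x = Real.sign y := by
  rcases pos_and_pos_or_neg_and_neg_of_mul_pos h with ⟨hx, hy⟩ | ⟨hx, hy⟩
  · rw [Real.sign_of_pos hx, Real.sign_of_pos hy]
  · rw [Real.sign_of_neg hx, Real.sign_of_neg hy]

lemma exists_forall_norm_sub_smul_le {E : Type*} [NormedAddCommGroup E] [NormedSpace ℝ E]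
    [FiniteDimensional ℝ E] (a v : E) : ∃ t : ℝ, ∀ u : ℝ, ‖a - t • v‖ ≤ ‖a - u • v‖ := by
  have : ProperSpace E := FiniteDimensional.proper ℝ E
  obtain ⟨w, hw, hdist⟩ := (Submodule.span ℝ {v}).closed_of_finiteDimensional.exists_infDist_eq_dist
    ⟨0, zero_mem _⟩ a
  obtain ⟨t, rfl⟩ := Submodule.mem_span_singleton.mp hw
  refine ⟨t, fun u => ?_⟩
  rw [← dist_eq_norm, ← dist_eq_norm, ← hdist]
  exact Metric.infDist_le_dist_of_mem (Submodule.mem_span_singleton.mpr ⟨u, rfl⟩)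

lemma norm_sub_mu_smul_le {n : ℕ} (a v : Fin n → ℝ) (u : ℝ) : ‖a - mu a v • v‖ ≤ ‖a - u • v‖ :=
  Classical.epsilon_spec (p := fun t : ℝ => ∀ u : ℝ, ‖a - t • v‖ ≤ ‖a - u • v‖)
    (exists_forall_norm_sub_smul_le a v) u

lemma mu_zero_left {n : ℕ} {v : Fin n → ℝ} (hv : v ≠ 0) : mu 0 v = 0 := by
  have h := norm_sub_mu_smul_le 0 v 0
  rw [zero_smul, sub_zero, norm_zero, norm_le_zero_iff, zero_sub, neg_eq_zero, smul_eq_zero] at h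
  exact h.resolve_right hv

lemma AlternanceFree.abs_lt_norm {n : ℕ} {a : Fin n → ℝ} (ha : AlternanceFree a) {i : Fin n}
    (hi : |a i| = ‖a‖) {j : Fin n} (hj : j ≠ i) : |a j| < ‖a‖ := by
  refine (norm_le_pi_norm a j).lt_of_ne fun h => hj ?_
  exact ha.unique h hi

lemma exists_norm_sub_smul_lt_norm {ι : Type*} [Fintype ι] {a v : ι → ℝ} {i : ι}
    (hai : a i ≠ 0) (hvi : v i ≠ 0) (hi : |a i| = ‖a‖) (hlt : ∀ j ≠ i, |a j| < ‖a‖) :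
    ∃ t : ℝ, ‖a - t • v‖ < ‖a‖ := by
  have hpos : 0 < ‖a‖ := hi ▸ abs_pos.mpr hai
  suffices ∀ᶠ s in 𝓝[>] (0 : ℝ), ∀ j, |a j - s * (a i * v i) * v j| < ‖a‖ by
    obtain ⟨s, hs⟩ := this.exists
    exact ⟨s * (a i * v i), (pi_norm_lt_iff hpos).mpr fun j => by simpa using hs j⟩
  rw [eventually_all]
  intro j
  rcases eq_or_ne j i with rfl | hj
  · filter_upwards [Ioo_mem_nhdsGT (show (0 : ℝ) < 1 / v j ^ 2 by positivity)] with s ⟨hs0, hs1⟩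
    have hlow : 0 < s * v j ^ 2 := by positivity
    have hup : s * v j ^ 2 < 1 := by rwa [lt_div_iff₀ (by positivity)] at hs1
    calc |a j - s * (a j * v j) * v j| = |a j| * |1 - s * v j ^ 2| := by rw [← abs_mul]; ring_nf
      _ < |a j| * 1 := by gcongr; rw [abs_lt]; constructor <;> linarith
      _ = ‖a‖ := by rw [mul_one, hi]
  · have hcont : Continuous fun s : ℝ => |a j - s * (a i * v i) * v j| := by fun_prop
    have hlim := hcont.tendsto 0
    simp only [zero_mul, sub_zero] at hlim
    exact nhdsWithin_le_nhds (hlim.eventually (gt_mem_nhds (hlt j hj)))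

lemma mu_mul_pos {n : ℕ} {a v : Fin n → ℝ} {i : Fin n} (hai : a i ≠ 0) (hvi : v i ≠ 0)
    (hi : |a i| = ‖a‖) (hlt : ∀ j ≠ i, |a j| < ‖a‖) : 0 < mu a v * (a i * v i) := by
  obtain ⟨t, ht⟩ := exists_norm_sub_smul_lt_norm hai hvi hi hlt
  by_contra! h
  have hwrong : |a i| ≤ |a i - mu a v * v i| :=
    abs_le_abs_sub_of_mul_nonpos (by rwa [mul_left_comm])
  have hcoord : |a i - mu a v * v i| ≤ ‖a - mu a v • v‖ := by
    simpa using norm_le_pi_norm (a - mu a v • v) i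
  linarith [norm_sub_mu_smul_le a v t]

theorem stmt3_general {n : ℕ} (a v : Fin n → ℝ) (ha : AlternanceFree a) (hv : Cheb v)
    (i : Fin n) (hi : |a i| = ‖a‖) :
    Real.sign (mu a v) = Real.sign (a i * v i) := by
  by_cases hai : a i = 0
  · obtain rfl : a = 0 := norm_eq_zero.mp (by rw [← hi, hai, abs_zero])
    rw [mu_zero_left fun h => hv i (by simp [h]), hai, zero_mul]
  · exact Real.sign_eq_sign_of_mul_pos (mu_mul_pos hai (hv i) hi fun j => ha.abs_lt_norm hi)

theorem stmt3 {n : ℕ} (hn : 2 ≤ n) (a v : Fin n → ℝ) (ha : AlternanceFree a) (hv : Cheb v)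
    (i : Fin n) (hi : |a i| = ‖a‖) :
    Real.sign (mu a v) = Real.sign (a i * v i) :=
  stmt3_general a v ha hv i hi
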